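/- arXiv:math/0609060 — 2 statements merged into one kernel-verified Lean document; each statement's English description precedes it below -/
import Mathlib

section
/- Let V be an n-dimensional real inner product space and set a_m(ξ₁,ξ₂,η₁,η₂) = tr_{Λ^m V}[ε(ξ₁)ι(ξ₂)ε(η₁)ι(η₂)] and A_{n,m} = Σ_{k=0}^{m} (−1)^k C(n, m−k). Then a_{m+1}(η₁,ξ₂,ξ₁,η₂) = a_m(ξ₁,ξ₂,η₁,η₂) + ⟨ξ₁,ξ₂⟩⟨η₁,η₂⟩ (2 A_{n,m} − C(n,m)). -/
open Finset RealInnerProductSpace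

/-- The model of the `n`-dimensional real inner product space `V`. -/
abbrev Vec (n : ℕ) := EuclideanSpace ℝ (Fin n)

/-- Operators on the exterior algebra `Λ V`, written as matrices in the
orthonormal basis `{e_S : S ⊆ {1,…,n}}` of `Λ V` (where `e_S = e_{i₁} ∧ ⋯ ∧ e_{i_k}`
for `S = {i₁ < ⋯ < i_k}`). -/
abbrev ExtMat (n : ℕ) := Matrix (Finset (Fin n)) (Finset (Fin n)) ℝ

/-- The sign `(-1)^{#{j ∈ S : j < i}}`. -/
noncomputable def sgn {n : ℕ} (S : Finset (Fin n)) (i : Fin n) : ℝ :=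
  (-1 : ℝ) ^ (S.filter (fun j => j < i)).card

/-- Exterior multiplication `ε(ξ)` by the vector `ξ`, as a matrix in the basis `{e_S}`:
`ε(ξ) e_S = ∑_{i ∉ S} (-1)^{#{j ∈ S : j < i}} ξᵢ e_{S ∪ {i}}`. -/
noncomputable def eps {n : ℕ} (ξ : Vec n) : ExtMat n :=
  fun T S => ∑ i : Fin n, if i ∉ S ∧ insert i S = T then sgn S i * ξ i else 0

/-- Interior multiplication (contraction) `ι(η)` by the vector `η`, via the inner product:
`ι(η) e_S = ∑_{i ∈ S} (-1)^{#{j ∈ S : j < i}} ηᵢ e_{S \ {i}}`. -/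
noncomputable def iot {n : ℕ} (η : Vec n) : ExtMat n :=
  fun T S => ∑ i : Fin n, if i ∉ T ∧ insert i T = S then sgn T i * η i else 0

/-- The trace over the degree-`m` part `Λ^m V` of a (degree-preserving) operator on `Λ V`. -/
noncomputable def trM {n : ℕ} (m : ℕ) (A : ExtMat n) : ℝ :=
  ∑ S ∈ Finset.univ.filter (fun S : Finset (Fin n) => S.card = m), A S S

/-- `p(ξ) = ε(ξ)ι(ξ) - ι(ξ)ε(ξ)`. -/
noncomputable def pMat {n : ℕ} (ξ : Vec n) : ExtMat n :=
  eps ξ * iot ξ - iot ξ * eps ξ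

/-- Binomial coefficient `C(a,b)` for integer arguments, with the convention that it
vanishes for negative arguments. -/
def chooseZ (a b : ℤ) : ℤ :=
  if 0 ≤ a ∧ 0 ≤ b then (a.toNat.choose b.toNat : ℤ) else 0
/-- `A_{n,m} = Σ_{k=0}^{m} (−1)^k C(n, m−k)`. -/
noncomputable def Asum (n m : ℕ) : ℝ :=
  ∑ k ∈ Finset.range (m + 1), (-1 : ℝ) ^ k * (n.choose (m - k) : ℝ)

variable {n : ℕ}

lemma sgn_sq (S : Finset (Fin n)) (i : Fin n) : sgn S i * sgn S i = 1 := by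
  unfold sgn; rw [← mul_pow]; norm_num

lemma eps_apply_insert (a : Vec n) (S : Finset (Fin n)) (i : Fin n) (hi : i ∉ S) :
    eps a (insert i S) S = sgn S i * a i := by
  unfold eps
  rw [Finset.sum_eq_single i]
  · simp [hi]
  · intro b _ hb
    rw [if_neg]
    rintro ⟨hbS, hbeq⟩
    have : i ∈ insert b S := hbeq ▸ Finset.mem_insert_self i S
    rcases Finset.mem_insert.1 this with h | h
    · exact hb h.symm
    · exact hi h
  · simp

lemma eps_apply_ne (a : Vec n) (T S : Finset (Fin n)) (h : ∀ i, i ∉ S → insert i S ≠ T) :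
    eps a T S = 0 := by
  unfold eps; apply Finset.sum_eq_zero; intro i _
  rw [if_neg]; rintro ⟨h1, h2⟩; exact h i h1 h2

lemma mulEI_apply (a b : Vec n) (T S : Finset (Fin n)) :
    (eps a * iot b) T S = ∑ j ∈ S, eps a T (S.erase j) * (sgn (S.erase j) j * b j) := by
  rw [Matrix.mul_apply]
  unfold iot
  simp_rw [Finset.mul_sum]
  rw [Finset.sum_comm]
  have key : ∀ i : Fin n, ∀ U : Finset (Fin n),
      (i ∉ U ∧ insert i U = S) ↔ (i ∈ S ∧ U = S.erase i) := by
    intro i U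
    constructor
    · rintro ⟨h1, h2⟩
      refine ⟨h2 ▸ Finset.mem_insert_self i U, ?_⟩
      rw [← h2, Finset.erase_insert h1]
    · rintro ⟨h1, h2⟩
      subst h2
      exact ⟨Finset.notMem_erase i S, Finset.insert_erase h1⟩
  calc ∑ i : Fin n, ∑ U : Finset (Fin n),
        eps a T U * (if i ∉ U ∧ insert i U = S then sgn U i * b i else 0)
      = ∑ i : Fin n, if i ∈ S then eps a T (S.erase i) * (sgn (S.erase i) i * b i) else 0 := by
        apply Finset.sum_congr rfl; intro i _
        simp_rw [key i, ite_and, mul_ite, mul_zero, Finset.sum_ite_irrel,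
          Finset.sum_ite_eq' Finset.univ (S.erase i), Finset.mem_univ, if_true,
          Finset.sum_const_zero]
    _ = ∑ j ∈ S, eps a T (S.erase j) * (sgn (S.erase j) j * b j) := by
        rw [Finset.sum_ite_mem, Finset.univ_inter]

lemma eps_back (a : Vec n) (S : Finset (Fin n)) (j : Fin n) (hj : j ∈ S) :
    eps a S (S.erase j) = sgn (S.erase j) j * a j := by
  have h := eps_apply_insert a (S.erase j) j (Finset.notMem_erase j S)
  rwa [Finset.insert_erase hj] at h

lemma EI_diag (a b : Vec n) (S : Finset (Fin n)) :
    (eps a * iot b) S S = ∑ j ∈ S, a j * b j := by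
  rw [mulEI_apply]
  apply Finset.sum_congr rfl; intro j hj
  rw [eps_back a S j hj, mul_mul_mul_comm, sgn_sq, one_mul]

lemma EI_off (a b : Vec n) (S : Finset (Fin n)) (j i : Fin n) (hj : j ∈ S) (hi : i ∉ S) :
    (eps a * iot b) S (insert i (S.erase j))
      = (sgn (S.erase j) j * a j) * (sgn (S.erase j) i * b i) := by
  have hij : i ≠ j := fun h => hi (h ▸ hj)
  have hie : i ∉ S.erase j := fun h => hi (Finset.mem_of_mem_erase h)
  rw [mulEI_apply]
  rw [Finset.sum_eq_single_of_mem i (Finset.mem_insert_self i _)]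
  · rw [Finset.erase_insert hie, eps_back a S j hj]
  · intro k hk hki
    have hkS : k ∈ S.erase j := by
      rcases Finset.mem_insert.1 hk with h | h
      · exact absurd h hki
      · exact h
    have : eps a S ((insert i (S.erase j)).erase k) = 0 := by
      apply eps_apply_ne
      intro p hp hins
      have hiin : i ∈ (insert i (S.erase j)).erase k :=
        Finset.mem_erase.2 ⟨fun h => (hki h.symm).elim, Finset.mem_insert_self i _⟩
      have : i ∈ S := hins ▸ Finset.mem_insert_of_mem hiin
      exact hi this
    rw [this, zero_mul]

lemma diag_entry (x₁ x₂ y₁ y₂ : Vec n) (S : Finset (Fin n)) :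
    (eps x₁ * iot x₂ * eps y₁ * iot y₂) S S
      = (∑ k ∈ S, x₁ k * x₂ k) * (∑ j ∈ S, y₁ j * y₂ j)
        + (∑ j ∈ S, x₁ j * y₂ j) * (∑ i ∈ Sᶜ, x₂ i * y₁ i) := by
  have sgnmul : ∀ (s t xa xb ya yb : ℝ), s * s = 1 → t * t = 1 →
      ((s * xa) * (t * xb)) * ((t * ya) * (s * yb)) = (xa * yb) * (xb * ya) := by
    intro s t xa xb ya yb hs ht
    calc ((s * xa) * (t * xb)) * ((t * ya) * (s * yb))
        = (s * s) * ((t * t) * ((xa * yb) * (xb * ya))) := by ring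
      _ = (xa * yb) * (xb * ya) := by rw [hs, ht]; ring
  rw [mul_assoc, Matrix.mul_apply]
  have step1 : ∀ U, (eps y₁ * iot y₂) U S
      = ∑ j ∈ S, eps y₁ U (S.erase j) * (sgn (S.erase j) j * y₂ j) :=
    fun U => mulEI_apply _ _ _ _
  simp_rw [step1, Finset.mul_sum]
  rw [Finset.sum_comm]
  have step2 : ∀ j ∈ S,
      (∑ U : Finset (Fin n), (eps x₁ * iot x₂) S U *
        (eps y₁ U (S.erase j) * (sgn (S.erase j) j * y₂ j)))
      = ((∑ k ∈ S, x₁ k * x₂ k) * (y₁ j * y₂ j)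
          + ∑ i ∈ Sᶜ, (x₁ j * y₂ j) * (x₂ i * y₁ i)) := by
    intro j hj
    have epsexp : ∀ U, eps y₁ U (S.erase j)
        = ∑ i : Fin n, if i ∉ S.erase j ∧ insert i (S.erase j) = U
            then sgn (S.erase j) i * y₁ i else 0 := by
      intro U; rfl
    simp_rw [epsexp, Finset.sum_mul, Finset.mul_sum]
    rw [Finset.sum_comm]
    have collapse : ∀ i : Fin n,
        (∑ U : Finset (Fin n), (eps x₁ * iot x₂) S U *
          ((if i ∉ S.erase j ∧ insert i (S.erase j) = U then sgn (S.erase j) i * y₁ i else 0)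
            * (sgn (S.erase j) j * y₂ j)))
        = if i ∈ insert j Sᶜ then
            (eps x₁ * iot x₂) S (insert i (S.erase j)) *
              ((sgn (S.erase j) i * y₁ i) * (sgn (S.erase j) j * y₂ j)) else 0 := by
      intro i
      have hset : i ∉ S.erase j ↔ i ∈ insert j Sᶜ := by
        simp only [Finset.mem_erase, Finset.mem_insert, Finset.mem_compl, not_and]
        constructor
        · intro h
          by_cases hij : i = j
          · exact Or.inl hij
          · exact Or.inr (fun hiS => (h hij) hiS)
        · rintro (h | h)
          · exact fun hne _ => absurd h hne
          · exact fun _ hiS => absurd hiS h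
      by_cases hi : i ∉ S.erase j
      · rw [if_pos (hset.1 hi)]
        rw [Finset.sum_eq_single (insert i (S.erase j))]
        · rw [if_pos ⟨hi, rfl⟩, mul_assoc]
        · intro U _ hU
          rw [if_neg (fun h => hU h.2.symm), zero_mul, mul_zero]
        · simp
      · rw [if_neg (fun h => hi (hset.2 h))]
        apply Finset.sum_eq_zero; intro U _
        rw [if_neg (fun h => hi h.1), zero_mul, mul_zero]
    simp_rw [collapse]
    rw [Finset.sum_ite_mem, Finset.univ_inter,
      Finset.sum_insert (by simp [hj] : j ∉ Sᶜ)]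
    congr 1
    · rw [Finset.insert_erase hj, EI_diag, mul_mul_mul_comm, sgn_sq, one_mul,
        Finset.sum_mul]
    · apply Finset.sum_congr rfl
      intro i hi
      have hiS : i ∉ S := Finset.mem_compl.1 hi
      rw [EI_off x₁ x₂ S j i hj hiS]
      exact sgnmul _ _ _ _ _ _ (sgn_sq _ _) (sgn_sq _ _)
  rw [Finset.sum_congr rfl step2, Finset.sum_add_distrib]
  congr 1
  rw [Finset.sum_comm]
  exact Finset.sum_congr rfl fun i _ => (Finset.sum_mul _ _ _).symm

lemma memsum (S : Finset (Fin n)) (f : Fin n → ℝ) :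
    ∑ k ∈ S, f k = ∑ k : Fin n, if k ∈ S then f k else 0 := by
  rw [Finset.sum_ite_mem, Finset.univ_inter]

lemma compsum (S : Finset (Fin n)) (f : Fin n → ℝ) :
    ∑ k ∈ Sᶜ, f k = ∑ k : Fin n, if k ∉ S then f k else 0 := by
  rw [show (∑ k : Fin n, if k ∉ S then f k else 0) = ∑ k : Fin n, if k ∈ Sᶜ then f k else 0
    by simp_rw [Finset.mem_compl]]
  rw [Finset.sum_ite_mem, Finset.univ_inter]

lemma count_swap (𝒮 : Finset (Finset (Fin n))) (f g : Fin n → ℝ)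
    (p q : Fin n → Finset (Fin n) → Prop) [∀ k S, Decidable (p k S)]
    [∀ k S, Decidable (q k S)] :
    ∑ S ∈ 𝒮, (∑ k : Fin n, if p k S then f k else 0) * (∑ j : Fin n, if q j S then g j else 0)
      = ∑ k : Fin n, ∑ j : Fin n, f k * g j *
          ((𝒮.filter (fun S => p k S ∧ q j S)).card : ℝ) := by
  simp_rw [Finset.sum_mul_sum, ite_zero_mul_ite_zero]
  rw [Finset.sum_comm]
  apply Finset.sum_congr rfl; intro k _
  rw [Finset.sum_comm]
  apply Finset.sum_congr rfl; intro j _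
  rw [Finset.sum_ite, Finset.sum_const, Finset.sum_const_zero, add_zero, nsmul_eq_mul]
  ring

lemma trace_pairs (m : ℕ) (x₁ x₂ y₁ y₂ : Vec n) :
    trM m (eps x₁ * iot x₂ * eps y₁ * iot y₂)
      = (∑ k : Fin n, ∑ j : Fin n, (x₁ k * x₂ k) * (y₁ j * y₂ j) *
          ((Finset.univ.filter
            (fun S : Finset (Fin n) => S.card = m ∧ k ∈ S ∧ j ∈ S)).card : ℝ))
        + ∑ k : Fin n, ∑ j : Fin n, (x₁ k * y₂ k) * (x₂ j * y₁ j) *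
          ((Finset.univ.filter
            (fun S : Finset (Fin n) => S.card = m ∧ k ∈ S ∧ j ∉ S)).card : ℝ) := by
  unfold trM
  calc ∑ S ∈ Finset.univ.filter (fun S : Finset (Fin n) => S.card = m),
        (eps x₁ * iot x₂ * eps y₁ * iot y₂) S S
      = ∑ S ∈ Finset.univ.filter (fun S : Finset (Fin n) => S.card = m),
          ((∑ k : Fin n, if k ∈ S then x₁ k * x₂ k else 0) *
            (∑ j : Fin n, if j ∈ S then y₁ j * y₂ j else 0)
          + (∑ k : Fin n, if k ∈ S then x₁ k * y₂ k else 0) *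
            (∑ j : Fin n, if j ∉ S then x₂ j * y₁ j else 0)) := by
        apply Finset.sum_congr rfl; intro S _
        rw [diag_entry, ← memsum, ← memsum, ← memsum, ← compsum]
    _ = _ := by
        rw [Finset.sum_add_distrib,
          count_swap _ (fun k => x₁ k * x₂ k) (fun j => y₁ j * y₂ j)
            (fun k S => k ∈ S) (fun j S => j ∈ S),
          count_swap _ (fun k => x₁ k * y₂ k) (fun j => x₂ j * y₁ j)
            (fun k S => k ∈ S) (fun j S => j ∉ S)]
        simp_rw [Finset.filter_filter]

lemma card_filter_eq (t u : Finset (Fin n)) (hd : Disjoint t u) (m : ℕ) :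
    ((Finset.univ : Finset (Finset (Fin n))).filter
      (fun S => S.card = t.card + m ∧ t ⊆ S ∧ Disjoint u S)).card
    = ((t ∪ u)ᶜ).card.choose m := by
  rw [← Finset.card_powersetCard]
  apply Finset.card_bij' (fun S _ => S \ t) (fun T _ => T ∪ t)
  · intro S hS
    obtain ⟨hcard, hts, hdu⟩ := Finset.mem_filter.1 hS |>.2
    rw [Finset.mem_powersetCard]
    constructor
    · intro x hx
      obtain ⟨hxS, hxt⟩ := Finset.mem_sdiff.1 hx
      rw [Finset.mem_compl, Finset.mem_union]
      rintro (h | h)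
      · exact hxt h
      · exact (Finset.disjoint_left.1 hdu) h hxS
    · rw [Finset.card_sdiff_of_subset hts, hcard]; omega
  · intro T hT
    obtain ⟨hsub, hcard⟩ := Finset.mem_powersetCard.1 hT
    have hdisj : Disjoint T t := by
      rw [Finset.disjoint_left]
      intro x hxT hxt
      have := hsub hxT
      rw [Finset.mem_compl, Finset.mem_union] at this
      exact this (Or.inl hxt)
    rw [Finset.mem_filter]
    refine ⟨Finset.mem_univ _, ?_, Finset.subset_union_right, ?_⟩
    · rw [Finset.card_union_of_disjoint hdisj, hcard, add_comm]
    · rw [Finset.disjoint_left]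
      intro x hxu hxTt
      rcases Finset.mem_union.1 hxTt with h | h
      · have := hsub h
        rw [Finset.mem_compl, Finset.mem_union] at this
        exact this (Or.inr hxu)
      · exact (Finset.disjoint_right.1 hd) hxu h
  · intro S hS
    obtain ⟨_, hts, _⟩ := Finset.mem_filter.1 hS |>.2
    exact Finset.sdiff_union_of_subset hts
  · intro T hT
    obtain ⟨hsub, _⟩ := Finset.mem_powersetCard.1 hT
    apply Finset.union_sdiff_cancel_right
    rw [Finset.disjoint_right]
    intro x hxt hxT
    have := hsub hxT
    rw [Finset.mem_compl, Finset.mem_union] at this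
    exact this (Or.inl hxt)

lemma card_single (k : Fin n) (m : ℕ) :
    ((Finset.univ : Finset (Finset (Fin n))).filter
      (fun S => S.card = m + 1 ∧ k ∈ S ∧ k ∈ S)).card = (n - 1).choose m := by
  have h := card_filter_eq {k} ∅ (Finset.disjoint_empty_right _) m
  have heq : ((Finset.univ : Finset (Finset (Fin n))).filter
      (fun S => S.card = m + 1 ∧ k ∈ S ∧ k ∈ S))
      = (Finset.univ.filter
        (fun S => S.card = ({k} : Finset (Fin n)).card + m ∧ {k} ⊆ S ∧ Disjoint ∅ S)) := by
    apply Finset.filter_congr; intro S _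
    simp [Finset.singleton_subset_iff, Nat.add_comm, and_assoc]
  rw [heq, h]
  congr 1
  simp [Finset.card_compl]

lemma card_mixed (k j : Fin n) (hkj : k ≠ j) (m : ℕ) :
    ((Finset.univ : Finset (Finset (Fin n))).filter
      (fun S => S.card = m + 1 ∧ k ∈ S ∧ j ∉ S)).card = (n - 2).choose m := by
  have h := card_filter_eq {k} {j} (Finset.disjoint_singleton.2 hkj) m
  have heq : ((Finset.univ : Finset (Finset (Fin n))).filter
      (fun S => S.card = m + 1 ∧ k ∈ S ∧ j ∉ S))
      = (Finset.univ.filter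
        (fun S => S.card = ({k} : Finset (Fin n)).card + m ∧ {k} ⊆ S ∧ Disjoint {j} S)) := by
    apply Finset.filter_congr; intro S _
    simp [Finset.singleton_subset_iff, Finset.disjoint_singleton_left, Nat.add_comm]
  rw [heq, h]
  congr 1
  rw [Finset.card_compl]
  congr 1
  · exact (Fintype.card_fin n)
  · rw [Finset.card_union_of_disjoint (Finset.disjoint_singleton.2 hkj)]
    simp

lemma card_pair (k j : Fin n) (hkj : k ≠ j) (m : ℕ) :
    ((Finset.univ : Finset (Finset (Fin n))).filter
      (fun S => S.card = m + 2 ∧ k ∈ S ∧ j ∈ S)).card = (n - 2).choose m := by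
  have hd : Disjoint ({k, j} : Finset (Fin n)) ∅ := Finset.disjoint_empty_right _
  have h := card_filter_eq {k, j} ∅ hd m
  have hc2 : ({k, j} : Finset (Fin n)).card = 2 := by
    rw [Finset.card_insert_of_notMem (by simp [hkj])]; simp
  have heq : ((Finset.univ : Finset (Finset (Fin n))).filter
      (fun S => S.card = m + 2 ∧ k ∈ S ∧ j ∈ S))
      = (Finset.univ.filter
        (fun S => S.card = ({k, j} : Finset (Fin n)).card + m ∧ {k, j} ⊆ S ∧ Disjoint ∅ S)) := by
    apply Finset.filter_congr; intro S _
    rw [hc2]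
    simp [Finset.insert_subset_iff, Finset.singleton_subset_iff, Nat.add_comm, and_assoc]
  rw [heq, h]
  congr 1
  rw [Finset.card_compl]
  congr 1
  · exact Fintype.card_fin n
  · simp [hc2]

lemma card_small (k j : Fin n) (m : ℕ) (P : Finset (Fin n) → Prop) [DecidablePred P]
    (hm : m < 2) (hkj : k ≠ j) :
    ((Finset.univ : Finset (Finset (Fin n))).filter
      (fun S => S.card = m ∧ k ∈ S ∧ j ∈ S)).card = 0 := by
  rw [Finset.card_eq_zero, Finset.filter_eq_empty_iff]
  rintro S _ ⟨hc, hk, hj⟩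
  have : ({k, j} : Finset (Fin n)) ⊆ S := by
    rw [Finset.insert_subset_iff, Finset.singleton_subset_iff]; exact ⟨hk, hj⟩
  have h2 : ({k, j} : Finset (Fin n)).card ≤ S.card := Finset.card_le_card this
  rw [Finset.card_insert_of_notMem (by simp [hkj])] at h2
  simp at h2
  omega

lemma card_single_zero (k : Fin n) :
    ((Finset.univ : Finset (Finset (Fin n))).filter
      (fun S => S.card = 0 ∧ k ∈ S ∧ k ∈ S)).card = 0 := by
  rw [Finset.card_eq_zero, Finset.filter_eq_empty_iff]
  rintro S _ ⟨hc, hk, _⟩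
  rw [Finset.card_eq_zero] at hc
  subst hc
  simp at hk

lemma card_mixed_zero (k j : Fin n) :
    ((Finset.univ : Finset (Finset (Fin n))).filter
      (fun S => S.card = 0 ∧ k ∈ S ∧ j ∉ S)).card = 0 := by
  rw [Finset.card_eq_zero, Finset.filter_eq_empty_iff]
  rintro S _ ⟨hc, hk, _⟩
  rw [Finset.card_eq_zero] at hc
  subst hc
  simp at hk

lemma card_diag_zero (k : Fin n) (m : ℕ) :
    ((Finset.univ : Finset (Finset (Fin n))).filter
      (fun S => S.card = m ∧ k ∈ S ∧ k ∉ S)).card = 0 := by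
  rw [Finset.card_eq_zero, Finset.filter_eq_empty_iff]
  rintro S _ ⟨_, hk, hk'⟩
  exact hk' hk

lemma card_pair_symm (k j : Fin n) (m : ℕ) :
    ((Finset.univ : Finset (Finset (Fin n))).filter
      (fun S => S.card = m ∧ k ∈ S ∧ j ∈ S)).card
    = ((Finset.univ : Finset (Finset (Fin n))).filter
      (fun S => S.card = m ∧ j ∈ S ∧ k ∈ S)).card := by
  congr 1
  apply Finset.filter_congr; intro S _
  tauto

lemma Asum_succ (n m : ℕ) : Asum n (m + 1) = (n.choose (m + 1) : ℝ) - Asum n m := by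
  unfold Asum
  rw [Finset.sum_range_succ']
  simp only [pow_succ, Nat.succ_sub_succ_eq_sub]
  have : ∀ k, (-1 : ℝ) ^ k * (-1) * (n.choose (m - k) : ℝ)
      = -((-1 : ℝ) ^ k * (n.choose (m - k) : ℝ)) := by intro k; ring
  simp_rw [this]
  rw [Finset.sum_neg_distrib]
  simp
  ring

lemma Asum_eq (ν m : ℕ) : Asum (ν + 1) m = (ν.choose m : ℝ) := by
  induction m with
  | zero => simp [Asum]
  | succ m ih =>
      rw [Asum_succ, ih, Nat.choose_succ_succ' ν m]
      push_cast
      ring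

lemma key1 (ν m : ℕ) (k : Fin (ν + 1)) :
    ((((Finset.univ : Finset (Finset (Fin (ν + 1)))).filter
        (fun S => S.card = m + 1 ∧ k ∈ S ∧ k ∈ S)).card : ℝ))
      - (((Finset.univ : Finset (Finset (Fin (ν + 1)))).filter
        (fun S => S.card = m ∧ k ∈ S ∧ k ∈ S)).card : ℝ)
    = 2 * Asum (ν + 1) m - ((ν + 1).choose m : ℝ) := by
  rw [Asum_eq, card_single]
  cases m with
  | zero =>
      rw [card_single_zero]
      simp
      norm_num
  | succ m' =>
      rw [card_single]
      rw [Nat.choose_succ_succ' ν m']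
      have : ν + 1 - 1 = ν := by omega
      rw [this]
      push_cast
      ring

lemma key2 (ν m : ℕ) (k j : Fin (ν + 2)) (hkj : k ≠ j) :
    ((((Finset.univ : Finset (Finset (Fin (ν + 2)))).filter
        (fun S => S.card = m + 1 ∧ k ∈ S ∧ j ∉ S)).card : ℝ))
      - (((Finset.univ : Finset (Finset (Fin (ν + 2)))).filter
        (fun S => S.card = m ∧ k ∈ S ∧ j ∈ S)).card : ℝ)
    = 2 * Asum (ν + 2) m - ((ν + 2).choose m : ℝ) := by
  have hA : Asum (ν + 2) m = ((ν + 1).choose m : ℝ) := Asum_eq (ν + 1) m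
  rw [hA, card_mixed k j hkj]
  have hsub : ν + 2 - 2 = ν := by omega
  rw [hsub]
  cases m with
  | zero =>
      rw [card_small k j 0 (fun _ => True) (by omega) hkj]
      simp
      norm_num
  | succ m' =>
      cases m' with
      | zero =>
          rw [card_small k j 1 (fun _ => True) (by omega) hkj]
          rw [show ν.choose (0+1) = ν from Nat.choose_one_right _,
            show (ν+1).choose (0+1) = ν + 1 from Nat.choose_one_right _,
            show (ν+2).choose (0+1) = ν + 2 from Nat.choose_one_right _]
          push_cast
          ring
      | succ m'' =>
          rw [card_pair k j hkj m'', hsub]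
          rw [Nat.choose_succ_succ' (ν + 1) (m'' + 1),
            Nat.choose_succ_succ' ν (m'' + 1), Nat.choose_succ_succ' ν m'']
          push_cast
          ring

lemma key3 (ν m : ℕ) (k j : Fin (ν + 2)) (hkj : k ≠ j) :
    (((Finset.univ : Finset (Finset (Fin (ν + 2)))).filter
        (fun S => S.card = m + 1 ∧ k ∈ S ∧ j ∈ S)).card)
    = (((Finset.univ : Finset (Finset (Fin (ν + 2)))).filter
        (fun S => S.card = m ∧ j ∈ S ∧ k ∉ S)).card) := by
  cases m with
  | zero =>
      rw [card_small k j 1 (fun _ => True) (by omega) hkj, card_mixed_zero]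
  | succ m' =>
      rw [card_pair k j hkj m', card_mixed j k (Ne.symm hkj) m']

lemma inner_expand (x y : Vec n) : (⟪x, y⟫ : ℝ) = ∑ i : Fin n, x i * y i := by
  rw [PiLp.inner_apply]
  apply Finset.sum_congr rfl
  intro i _
  simp [RCLike.inner_apply, mul_comm]


/-- the recursion
`a_{m+1}(η₁,ξ₂,ξ₁,η₂) = a_m(ξ₁,ξ₂,η₁,η₂) + ⟨ξ₁,ξ₂⟩⟨η₁,η₂⟩ (2 A_{n,m} − C(n,m))`,
where `a_m(ξ₁,ξ₂,η₁,η₂) = tr_{Λ^m V}[ε(ξ₁)ι(ξ₂)ε(η₁)ι(η₂)]`. -/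
theorem a_recursion (n m : ℕ) (ξ₁ ξ₂ η₁ η₂ : Vec n) :
    trM (m + 1) (eps η₁ * iot ξ₂ * eps ξ₁ * iot η₂)
      = trM m (eps ξ₁ * iot ξ₂ * eps η₁ * iot η₂)
        + (⟪ξ₁, ξ₂⟫ : ℝ) * (⟪η₁, η₂⟫ : ℝ) * (2 * Asum n m - (n.choose m : ℝ)) := by
  rw [trace_pairs (m + 1) η₁ ξ₂ ξ₁ η₂, trace_pairs m ξ₁ ξ₂ η₁ η₂,
    inner_expand, inner_expand]
  set E : ℝ := 2 * Asum n m - (n.choose m : ℝ) with hE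
  -- abbreviations for the four counting functions
  have swap2 : (∑ k : Fin n, ∑ j : Fin n, (η₁ k * η₂ k) * (ξ₂ j * ξ₁ j) *
        ((Finset.univ.filter
          (fun S : Finset (Fin n) => S.card = m + 1 ∧ k ∈ S ∧ j ∉ S)).card : ℝ))
      = ∑ k : Fin n, ∑ j : Fin n, (η₁ j * η₂ j) * (ξ₂ k * ξ₁ k) *
        ((Finset.univ.filter
          (fun S : Finset (Fin n) => S.card = m + 1 ∧ j ∈ S ∧ k ∉ S)).card : ℝ) :=
    Finset.sum_comm
  have swap4 : (∑ k : Fin n, ∑ j : Fin n, (ξ₁ k * η₂ k) * (ξ₂ j * η₁ j) *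
        ((Finset.univ.filter
          (fun S : Finset (Fin n) => S.card = m ∧ k ∈ S ∧ j ∉ S)).card : ℝ))
      = ∑ k : Fin n, ∑ j : Fin n, (ξ₁ j * η₂ j) * (ξ₂ k * η₁ k) *
        ((Finset.univ.filter
          (fun S : Finset (Fin n) => S.card = m ∧ j ∈ S ∧ k ∉ S)).card : ℝ) :=
    Finset.sum_comm
  rw [swap2, swap4]
  have prodform : (∑ i : Fin n, ξ₁ i * ξ₂ i) * (∑ i : Fin n, η₁ i * η₂ i) * E
      = ∑ k : Fin n, ∑ j : Fin n, (ξ₁ k * ξ₂ k) * (η₁ j * η₂ j) * E := by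
    rw [Finset.sum_mul_sum, Finset.sum_mul]
    apply Finset.sum_congr rfl; intro k _
    rw [Finset.sum_mul]
  rw [prodform, ← Finset.sum_add_distrib, ← Finset.sum_add_distrib,
    ← Finset.sum_add_distrib]
  apply Finset.sum_congr rfl; intro k _
  rw [← Finset.sum_add_distrib, ← Finset.sum_add_distrib, ← Finset.sum_add_distrib]
  apply Finset.sum_congr rfl; intro j _
  -- now a pointwise identity in k, j
  by_cases hkj : k = j
  · subst hkj
    rw [card_diag_zero, card_diag_zero]
    obtain ⟨ν, rfl⟩ : ∃ ν, n = ν + 1 := ⟨n - 1, by have := k.pos; omega⟩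
    have h1 := key1 ν m k
    push_cast
    linear_combination (ξ₁ k * ξ₂ k * (η₁ k * η₂ k)) * h1
  · obtain ⟨ν, rfl⟩ : ∃ ν, n = ν + 2 := by
      rcases n with _ | _ | ν
      · exact k.elim0
      · exact absurd (Fin.fin_one_eq_zero k ▸ Fin.fin_one_eq_zero j ▸ rfl) hkj
      · exact ⟨ν, rfl⟩
    have h2 := key2 ν m j k (Ne.symm hkj)
    have h3 := key3 ν m k j hkj
    have h3' : ((((Finset.univ : Finset (Finset (Fin (ν + 2)))).filter
        (fun S => S.card = m + 1 ∧ k ∈ S ∧ j ∈ S)).card : ℝ))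
        = (((Finset.univ : Finset (Finset (Fin (ν + 2)))).filter
        (fun S => S.card = m ∧ j ∈ S ∧ k ∉ S)).card : ℝ) := by exact_mod_cast h3
    have hsymm : ((((Finset.univ : Finset (Finset (Fin (ν + 2)))).filter
        (fun S => S.card = m ∧ j ∈ S ∧ k ∈ S)).card : ℝ))
        = (((Finset.univ : Finset (Finset (Fin (ν + 2)))).filter
        (fun S => S.card = m ∧ k ∈ S ∧ j ∈ S)).card : ℝ) := by
      exact_mod_cast card_pair_symm j k m
    rw [h3']
    rw [hsymm] at h2
    linear_combination (ξ₁ k * ξ₂ k * (η₁ j * η₂ j)) * h2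
end

section
/- Let V be a 4-dimensional real inner product space with orthonormal basis containing a distinguished vector e₄ = dx_n. For ξ' in the orthogonal complement of e₄ and any η ∈ V with component η_n = ⟨η, e₄⟩ and tangential part η', the trace on Λ² V of ε(e₄)ι(ξ')ε(η)ι(η) equals 2 η_n ⟨ξ', η'⟩. -/
open Finset RealInnerProductSpace

lemma sum16 (f : Finset (Fin 4) → ℝ) : ∑ S, f S = f ∅ + f {0} + f {1} + f {2} + f {3} + f {0,1} + f {0,2} + f {0,3} + f {1,2} + f {1,3} + f {2,3} + f {0,1,2} + f {0,1,3} + f {0,2,3} + f {1,2,3} + f {0,1,2,3} := by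
  rw [show (univ : Finset (Finset (Fin 4))) = {∅, {0}, {1}, {2}, {3}, {0,1}, {0,2}, {0,3}, {1,2}, {1,3}, {2,3}, {0,1,2}, {0,1,3}, {0,2,3}, {1,2,3}, {0,1,2,3}} from by decide]
  repeat rw [Finset.sum_insert (by decide)]
  rw [Finset.sum_singleton]; ring

set_option maxHeartbeats 4000000 in
/-- for `n = 4`, with distinguished unit basis vector `e₄`, `ξ' ⊥ e₄`,
and `η = η' + η_n e₄`, one has `tr_{Λ²V}[ε(e₄)ι(ξ')ε(η)ι(η)] = 2 η_n ⟨ξ',η'⟩`. -/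
theorem trace_Lambda2_dim4 (e : Vec 4) (he : e = EuclideanSpace.single 3 1)
    (ξ' η : Vec 4) (hξ : (⟪ξ', e⟫ : ℝ) = 0) :
    trM 2 (eps e * iot ξ' * eps η * iot η)
      = 2 * (⟪η, e⟫ : ℝ) * (⟪ξ', η - (⟪η, e⟫ : ℝ) • e⟫ : ℝ) := by
  subst he
  simp +decide [PiLp.inner_apply, RCLike.inner_apply, Fin.sum_univ_four,
    EuclideanSpace.single_apply] at hξ
  rw [trM, show Finset.univ.filter (fun S : Finset (Fin 4) => S.card = 2) =
    ({{0,1},{0,2},{0,3},{1,2},{1,3},{2,3}} : Finset (Finset (Fin 4))) from by decide]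
  repeat rw [Finset.sum_insert (by decide)]
  rw [Finset.sum_singleton]
  simp only [Matrix.mul_apply, sum16]
  simp +decide [eps, iot, sgn, Fin.sum_univ_four, Finset.filter_insert,
    EuclideanSpace.single_apply, PiLp.inner_apply, RCLike.inner_apply,
    PiLp.smul_apply, PiLp.sub_apply, smul_eq_mul, hξ]
  ring
end
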